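/- Any k-ary operator of the following form is unbiased: given arguments x^(1), ..., x^(k) ∈ {0,1}^n, compute the index-set partition S_0, ..., S_{2^{k-1}-1} and sizes n_j = |S_j|; choose numbers d_j with 0 ≤ d_j ≤ n_j depending only on (n_0, ..., n_{2^{k-1}-1}); choose for each j a uniformly random subset F_j ⊆ S_j with |F_j| = d_j; and output the string y that differs from x^(1) exactly on F = ∪_j F_j. Then P_X(y | x^(1),...,x^(k)) = P_X(y ⊕ z | x^(1) ⊕ z,...,x^(k) ⊕ z) for all z, and P_X(y | x^(1),...,x^(k)) = P_X(π(y) | π(x^(1)),...,π(x^(k))) for all permutations π. -/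

import Mathlib

/-- Group index of a bit position `i` w.r.t. arguments `x 0, …, x (k-1)`:
`j = Σ_{t=1}^{k-1} 2^(t-1) · [x 0 i ≠ x t i]` (0-indexed version of the paper's
`Σ_{t=2}^{k} 2^(t-2) · [x⁽¹⁾_i ≠ x⁽ᵗ⁾_i]`). -/
def grpIdx {n k : ℕ} [NeZero k] (x : Fin k → Fin n → Bool) (i : Fin n) : ℕ :=
  ∑ t : Fin k, if t ≠ 0 ∧ x 0 i ≠ x t i then 2 ^ ((t : ℕ) - 1) else 0

/-- The index set `S_j`. -/
def grpSet {n k : ℕ} [NeZero k] (x : Fin k → Fin n → Bool) (j : ℕ) : Finset (Fin n) :=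
  Finset.univ.filter (fun i => grpIdx x i = j)

/-- Applying a coordinate permutation `π` to a bit string. -/
def permStr {n : ℕ} (π : Equiv.Perm (Fin n)) (s : Fin n → Bool) : Fin n → Bool :=
  fun j => s (π.symm j)

/-- The conditional distribution of the operator of Lemma 1 (the "general form"):
given the group sizes `n_j = |S_j|`, numbers `d (n_·) j ≤ n_j` are chosen depending
only on the sizes; a uniformly random `d_j`-element subset `F_j ⊆ S_j` is chosen
in each group, and the output differs from `x 0` exactly on `∪ F_j`.  The
probability of producing `y` is the product over groups of
`1 / C(n_j, d_j)` if `y` differs from `x 0` in exactly `d_j` positions of `S_j`,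
and `0` otherwise. -/
noncomputable def opProb {n k : ℕ} [NeZero k] (d : (ℕ → ℕ) → ℕ → ℕ)
    (x : Fin k → Fin n → Bool) (y : Fin n → Bool) : ℝ :=
  ∏ j ∈ Finset.range (2 ^ (k - 1)),
    if ((grpSet x j).filter (fun i => y i ≠ x 0 i)).card
        = d (fun j' => (grpSet x j').card) j
    then 1 / (Nat.choose (grpSet x j).card (d (fun j' => (grpSet x j').card) j) : ℝ)
    else 0

/-!
A common XOR-shift leaves every bit difference `x s i ≠ x t i` and `y i ≠ x 0 i` unchanged,
and a coordinate permutation merely relabels positions. In both cases each group `S_j`, and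
the positions of `S_j` where `y` differs from `x 0`, keep their cardinalities, and `opProb`
depends on nothing else.
-/

section

variable {n k : ℕ} [NeZero k]

lemma opProb_eq_of_card_eq (d : (ℕ → ℕ) → ℕ → ℕ) {x x' : Fin k → Fin n → Bool}
    {y y' : Fin n → Bool} (hS : ∀ j, (grpSet x j).card = (grpSet x' j).card)
    (hF : ∀ j, ((grpSet x j).filter (fun i => y i ≠ x 0 i)).card
      = ((grpSet x' j).filter (fun i => y' i ≠ x' 0 i)).card) :
    opProb d x y = opProb d x' y' := by
  simp only [opProb, hS, hF]

lemma grpIdx_xor (x : Fin k → Fin n → Bool) (z : Fin n → Bool) (i : Fin n) :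
    grpIdx (fun t i => xor (x t i) (z i)) i = grpIdx x i := by
  simp only [grpIdx, ne_eq, Bool.xor_left_inj]

lemma grpSet_xor (x : Fin k → Fin n → Bool) (z : Fin n → Bool) (j : ℕ) :
    grpSet (fun t i => xor (x t i) (z i)) j = grpSet x j := by
  simp only [grpSet, grpIdx_xor]

lemma grpSet_permStr (x : Fin k → Fin n → Bool) (π : Equiv.Perm (Fin n)) (j : ℕ) :
    grpSet (fun t => permStr π (x t)) j = (grpSet x j).map π.toEmbedding := by
  ext i
  simp only [Finset.mem_map_equiv, grpSet, Finset.mem_filter, Finset.mem_univ, true_and]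
  rfl

end

theorem stmt_5_general (n k : ℕ) [NeZero k] (d : (ℕ → ℕ) → ℕ → ℕ) :
    (∀ (x : Fin k → Fin n → Bool) (y z : Fin n → Bool),
        opProb d x y
          = opProb d (fun t i => xor (x t i) (z i)) (fun i => xor (y i) (z i))) ∧
    (∀ (x : Fin k → Fin n → Bool) (y : Fin n → Bool) (π : Equiv.Perm (Fin n)),
        opProb d x y = opProb d (fun t => permStr π (x t)) (permStr π y)) := by
  refine ⟨fun x y z => ?_, fun x y π => ?_⟩
  · refine opProb_eq_of_card_eq d (fun j => by rw [grpSet_xor]) fun j => ?_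
    simp only [grpSet_xor, ne_eq, Bool.xor_left_inj]
  · refine opProb_eq_of_card_eq d (fun j => by rw [grpSet_permStr, Finset.card_map])
      fun j => ?_
    simp only [grpSet_permStr, Finset.filter_map, Finset.card_map, Function.comp_def, permStr,
      Equiv.coe_toEmbedding, Equiv.symm_apply_apply]

/-- Any operator of the general form of Lemma 1 is unbiased: its conditional
distribution is invariant under common XOR-shifts and coordinate permutations. -/
theorem stmt_5 (n k : ℕ) [NeZero k] (d : (ℕ → ℕ) → ℕ → ℕ)
    (hd : ∀ (sizes : ℕ → ℕ) (j : ℕ), d sizes j ≤ sizes j) :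
    (∀ (x : Fin k → Fin n → Bool) (y z : Fin n → Bool),
        opProb d x y
          = opProb d (fun t i => xor (x t i) (z i)) (fun i => xor (y i) (z i))) ∧
    (∀ (x : Fin k → Fin n → Bool) (y : Fin n → Bool) (π : Equiv.Perm (Fin n)),
        opProb d x y = opProb d (fun t => permStr π (x t)) (permStr π y)) :=
  stmt_5_general n k d
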